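/- The vector field a : ℝ² → ℝ² defined by a(p) = p / (1 + ‖p‖) is monotone: for all p, q ∈ ℝ², ⟨a(p) - a(q), p - q⟩ ≥ 0. -/

import Mathlib

noncomputable def fluxA (p : EuclideanSpace ℝ (Fin 2)) : EuclideanSpace ℝ (Fin 2) :=
  (1 + ‖p‖)⁻¹ • p

/-!
The flux is radial, `a(p) = g(‖p‖) • p` with `g ≥ 0`. Expanding the inner product and bounding
`⟪p, q⟫ ≤ ‖p‖ ‖q‖` by Cauchy–Schwarz reduces monotonicity of such a field to monotonicity of the
scalar profile `t ↦ t g(t) = t / (1 + t)` on `[0, ∞)`.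
-/

open Set RealInnerProductSpace

section Radial

variable {E : Type*} [NormedAddCommGroup E] [InnerProductSpace ℝ E]

theorem sub_mul_sub_le_inner_smul_sub_smul {c d : ℝ} (hcd : 0 ≤ c + d) (p q : E) :
    (‖p‖ * c - ‖q‖ * d) * (‖p‖ - ‖q‖) ≤ ⟪c • p - d • q, p - q⟫ := by
  have hexpand : ⟪c • p - d • q, p - q⟫ = c * ‖p‖ ^ 2 + d * ‖q‖ ^ 2 - (c + d) * ⟪p, q⟫ := by
    simp only [inner_sub_left, inner_sub_right, real_inner_smul_left,
      real_inner_self_eq_norm_sq, real_inner_comm q p]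
    ring
  rw [hexpand]
  nlinarith [mul_le_mul_of_nonneg_left (real_inner_le_norm p q) hcd]

theorem real_inner_radial_sub_nonneg {g : ℝ → ℝ} (hg : ∀ t, 0 ≤ t → 0 ≤ g t)
    (hprofile : MonotoneOn (fun t => t * g t) (Ici 0)) (p q : E) :
    0 ≤ ⟪g ‖p‖ • p - g ‖q‖ • q, p - q⟫ :=
  have hp : ‖p‖ ∈ Ici (0 : ℝ) := norm_nonneg p
  have hq : ‖q‖ ∈ Ici (0 : ℝ) := norm_nonneg q
  ((monovaryOn_id_iff.2 hprofile).sub_mul_sub_nonneg hq hp).trans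
    (sub_mul_sub_le_inner_smul_sub_smul (add_nonneg (hg _ hp) (hg _ hq)) p q)

end Radial

theorem monotoneOn_mul_one_add_inv : MonotoneOn (fun t : ℝ => t * (1 + t)⁻¹) (Ici 0) := by
  intro s (hs : 0 ≤ s) t (ht : 0 ≤ t) hst
  simp only [← div_eq_mul_inv]
  rw [div_le_div_iff₀ (by positivity) (by positivity)]
  linarith

theorem flux_monotone (p q : EuclideanSpace ℝ (Fin 2)) :
    (0 : ℝ) ≤ inner ℝ (fluxA p - fluxA q) (p - q) :=
  real_inner_radial_sub_nonneg (fun t ht => by positivity) monotoneOn_mul_one_add_inv p q
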